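/- arXiv:1403.0774 — 11 statements merged into one kernel-verified Lean document; each statement's English description precedes it below -/
import Mathlib

section
/- Let C be a category with all small limits. Then the category Prod(C) of formal products of objects of C has all small limits. -/
open CategoryTheory Limits

universe v u

/-- The category of formal products of objects of `C`. -/
structure FormalProd (C : Type u) [Category.{v} C] : Type (max u (v + 1)) where
  ι : Type v
  obj : ι → C

namespace FormalProd

variable {C : Type u} [Category.{v} C]

instance : Category.{v} (FormalProd C) where
  Hom A B := Σ r : B.ι → A.ι, ∀ j : B.ι, A.obj (r j) ⟶ B.obj j
  id A := ⟨fun i => i, fun i => 𝟙 (A.obj i)⟩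
  comp {A B D} f g := ⟨fun k => f.1 (g.1 k), fun k => f.2 (g.1 k) ≫ g.2 k⟩
  id_comp f := by obtain ⟨r, φ⟩ := f; simp
  comp_id f := by obtain ⟨r, φ⟩ := f; simp
  assoc f g h := by simp

/-- The index map of a morphism of formal products. -/
def Hom.index {A B : FormalProd C} (f : A ⟶ B) : B.ι → A.ι := f.1

/-- The components of a morphism of formal products. -/
def Hom.component {A B : FormalProd C} (f : A ⟶ B) (j : B.ι) :
    A.obj (Hom.index f j) ⟶ B.obj j := f.2 j

end FormalProd

/-!
Sending a formal product to its index type is a functor `Prod(C)ᵒᵖ ⥤ Type`, so the limit of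
`F : J ⥤ Prod(C)` must be indexed by the colimit `L` of the index types of the `F j`. An element
`x ∈ L` is represented by pairs `(j, i)` with `i` an index of `F j`; these pairs, linked by the
index maps of the `F f`, form a diagram in `C` whose limit is the factor at `x`. A cone over `F`
with apex `X` has its index maps assembled by the colimit property of `L` into a map `L → X.ι`,
and its components then become, for each `x`, a cone over the diagram at `x`.
-/

open Opposite

namespace FormalProd

variable {C : Type u} [Category.{v} C]

section Hom

variable {A B D : FormalProd C}

@[simp]
lemma index_comp (f : A ⟶ B) (g : B ⟶ D) (k : D.ι) :
    Hom.index (f ≫ g) k = Hom.index f (Hom.index g k) := rfl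

lemma component_comp (f : A ⟶ B) (g : B ⟶ D) (k : D.ι) :
    Hom.component (f ≫ g) k = Hom.component f (Hom.index g k) ≫ Hom.component g k := rfl

/-- Stating equations between components through `componentOfEq` keeps the transport along
index equalities explicit, so that no rewriting inside dependent types is needed. -/
def Hom.componentOfEq (f : A ⟶ B) {i : A.ι} {j : B.ι} (h : Hom.index f j = i) :
    A.obj i ⟶ B.obj j :=
  eqToHom (congrArg A.obj h.symm) ≫ Hom.component f j

@[simp]
lemma Hom.componentOfEq_rfl (f : A ⟶ B) (j : B.ι) :
    Hom.componentOfEq f (rfl : Hom.index f j = _) = Hom.component f j := by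
  simp [componentOfEq]

lemma Hom.componentOfEq_id {i j : A.ι} (h : j = i) :
    Hom.componentOfEq (𝟙 A) h = eqToHom (congrArg A.obj h.symm) := by
  subst h
  exact Category.id_comp _

lemma Hom.componentOfEq_comp (f : A ⟶ B) (g : B ⟶ D) {i : A.ι} {j : B.ι} {k : D.ι}
    (hf : Hom.index f j = i) (hg : Hom.index g k = j) :
    Hom.componentOfEq (f ≫ g) (by rw [index_comp, hg, hf]) =
      Hom.componentOfEq f hf ≫ Hom.componentOfEq g hg := by
  subst hf hg
  simp only [componentOfEq_rfl]
  exact Category.id_comp _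

lemma Hom.componentOfEq_congr {f g : A ⟶ B} (hfg : f = g) {i : A.ι} {j : B.ι}
    (hf : Hom.index f j = i) (hg : Hom.index g j = i) :
    Hom.componentOfEq f hf = Hom.componentOfEq g hg := by
  subst hfg; rfl

lemma hom_ext {f g : A ⟶ B} (hindex : ∀ j, Hom.index f j = Hom.index g j)
    (hcomponent : ∀ j, Hom.component f j = Hom.componentOfEq g (hindex j).symm) : f = g := by
  obtain ⟨r, φ⟩ := f
  obtain ⟨s, ψ⟩ := g
  obtain rfl : r = s := funext hindex
  exact congrArg _ (funext fun j => (hcomponent j).trans (Category.id_comp _))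

end Hom

def indexFunctor : (FormalProd C)ᵒᵖ ⥤ Type v where
  obj A := A.unop.ι
  map f := TypeCat.ofHom (Hom.index f.unop)

section LimitCone

variable {J : Type v} [Category.{v} J] (F : J ⥤ FormalProd C)

abbrev indexDiagram : Jᵒᵖ ⥤ Type v := F.op ⋙ indexFunctor

def elementsDiagram : (indexDiagram F).Elementsᵒᵖ ⥤ C where
  obj p := (F.obj p.unop.1.unop).obj p.unop.2
  map e := Hom.componentOfEq (F.map e.unop.1.unop) e.unop.2
  map_id p := (Hom.componentOfEq_congr (F.map_id p.unop.1.unop) _ rfl).trans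
    (Hom.componentOfEq_id _)
  map_comp e e' := (Hom.componentOfEq_congr (F.map_comp _ _) _ _).trans
    (Hom.componentOfEq_comp _ _ e.unop.2 e'.unop.2)

def fiber (x : colimit (indexDiagram F)) : ObjectProperty (indexDiagram F).Elementsᵒᵖ :=
  fun p => colimit.ι (indexDiagram F) p.unop.1 p.unop.2 = x

abbrev fiberDiagram (x : colimit (indexDiagram F)) : (fiber F x).FullSubcategory ⥤ C :=
  (fiber F x).ι ⋙ elementsDiagram F

variable {F} in
noncomputable def liftIndex (s : Cone F) : colimit (indexDiagram F) ⟶ s.pt.ι :=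
  colimit.desc _ (indexFunctor.mapCocone s.op)

variable {F} in
lemma liftIndex_ι (s : Cone F) (j : Jᵒᵖ) (i : (F.obj j.unop).ι) :
    liftIndex s (colimit.ι (indexDiagram F) j i) = Hom.index (s.π.app j.unop) i :=
  ConcreteCategory.congr_hom (colimit.ι_desc (indexFunctor.mapCocone s.op) j) i

variable [HasLimits C]

noncomputable def limitObj : FormalProd C :=
  ⟨colimit (indexDiagram F), fun x => limit (fiberDiagram F x)⟩

noncomputable def limitπ (j : J) : limitObj F ⟶ F.obj j :=
  ⟨colimit.ι (indexDiagram F) (op j), fun i => limit.π (fiberDiagram F _) ⟨op ⟨op j, i⟩, rfl⟩⟩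

lemma limitπ_componentOfEq (j : J) (i : (F.obj j).ι) {x : colimit (indexDiagram F)}
    (h : Hom.index (limitπ F j) i = x) :
    Hom.componentOfEq (limitπ F j) h = limit.π (fiberDiagram F x) ⟨op ⟨op j, i⟩, h⟩ := by
  subst h
  exact Category.id_comp _

lemma limitπ_comp_map {j j' : J} (f : j ⟶ j') : limitπ F j ≫ F.map f = limitπ F j' := by
  have hindex (i : (F.obj j').ι) :
      Hom.index (limitπ F j ≫ F.map f) i = Hom.index (limitπ F j') i :=
    ConcreteCategory.congr_hom (colimit.w (indexDiagram F) f.op) i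
  refine hom_ext hindex fun i => ?_
  rw [component_comp, limitπ_componentOfEq F j' i (hindex i).symm]
  let e : (⟨op ((indexDiagram F).elementsMk (op j) (Hom.index (F.map f) i)), rfl⟩ :
      (fiber F _).FullSubcategory) ⟶
      ⟨op ((indexDiagram F).elementsMk (op j') i), (hindex i).symm⟩ :=
    ObjectProperty.homMk (CategoryOfElements.homMk _ _ f.op rfl).op
  refine Eq.trans ?_ (limit.w (fiberDiagram F _) e)
  exact congrArg _ (Hom.componentOfEq_rfl _ _).symm

noncomputable def limitCone : Cone F where
  pt := limitObj F
  π.app := limitπ F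
  π.naturality _ _ f := (Category.id_comp _).trans (limitπ_comp_map F f).symm

lemma limitObj_hom_ext {X : FormalProd C} {f g : X ⟶ limitObj F}
    (h : ∀ j, f ≫ limitπ F j = g ≫ limitπ F j) : f = g := by
  have hindex (x : colimit (indexDiagram F)) : Hom.index f x = Hom.index g x := by
    obtain ⟨j, i, rfl⟩ := Types.jointly_surjective' x
    exact congrArg (Hom.index · i) (h j.unop)
  refine hom_ext hindex fun x => limit.hom_ext fun ⟨⟨j, (i : (F.obj j.unop).ι)⟩, hp⟩ => ?_
  subst hp
  have hcomp := Hom.componentOfEq_congr (h j.unop) rfl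
    (hindex (Hom.index (limitπ F j.unop) i)).symm
  rw [Hom.componentOfEq_rfl, Hom.componentOfEq_comp g _ _ rfl, Hom.componentOfEq_rfl] at hcomp
  exact hcomp

variable {F}

noncomputable def liftFiberCone (s : Cone F) (x : colimit (indexDiagram F)) :
    Cone (fiberDiagram F x) where
  pt := s.pt.obj (liftIndex s x)
  π.app p := Hom.componentOfEq (s.π.app p.obj.unop.1.unop)
    ((liftIndex_ι s _ _).symm.trans (congrArg _ p.property))
  π.naturality _ _ e := (Category.id_comp _).trans <|
    (Hom.componentOfEq_congr (s.w e.hom.unop.1.unop) _ _).symm.trans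
      (Hom.componentOfEq_comp _ _ _ e.hom.unop.2)

noncomputable def liftHom (s : Cone F) : s.pt ⟶ limitObj F :=
  ⟨liftIndex s, fun x => limit.lift _ (liftFiberCone s x)⟩

lemma liftHom_comp_limitπ (s : Cone F) (j : J) : liftHom s ≫ limitπ F j = s.π.app j :=
  hom_ext (fun i => liftIndex_ι s (op j) i) fun _ => limit.lift_π _ _

variable (F)

noncomputable def isLimitLimitCone : IsLimit (limitCone F) where
  lift := liftHom
  fac := liftHom_comp_limitπ
  uniq s _ hm := limitObj_hom_ext F fun j => (hm j).trans (liftHom_comp_limitπ s j).symm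

end LimitCone

end FormalProd

/-- If `C` has all small limits, then the category `Prod(C)` of formal products of
objects of `C` has all small limits. -/
theorem formalProd_hasLimits (C : Type u) [Category.{v} C] [HasLimits C] :
    HasLimits (FormalProd C) :=
  ⟨fun _ _ => ⟨fun F => HasLimit.mk ⟨_, FormalProd.isLimitLimitCone F⟩⟩⟩
end

section
/- Let C be a category with all small colimits. Then the category Prod(C) of formal products of objects of C has all small colimits. -/
open CategoryTheory Limits

universe v u

/-!
A diagram `F` in `Prod(C)` has contravariant index sets, so the colimit is indexed by their limit:
the compatible families `s` of indices `s j ∈ (F j).ι`. Over such an `s` the components of `F`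
form a diagram `j ↦ (F j).obj (s j)` in `C`, and the colimit of `F` is the formal product of the
colimits of these diagrams. A cocone over `F` with vertex `∏_k B_k` gives, for each `k`, both a
compatible family and a cocone over the corresponding diagram, which is how it factors uniquely.
-/

universe w

namespace FormalProd

variable {C : Type u} [Category.{v} C]

section Hom

variable {A B D : FormalProd C}

@[simp] lemma id_fst (i : A.ι) : (𝟙 A : A ⟶ A).1 i = i := rfl

@[simp] lemma id_snd (i : A.ι) : (𝟙 A : A ⟶ A).2 i = 𝟙 (A.obj i) := rfl

@[simp] lemma comp_snd (f : A ⟶ B) (g : B ⟶ D) (k : D.ι) :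
    (f ≫ g).2 k = f.2 (g.1 k) ≫ g.2 k := rfl

lemma Hom.congr_snd {f g : A ⟶ B} (h : f = g) (j : B.ι) :
    f.2 j = eqToHom (by rw [h]) ≫ g.2 j := by
  subst h
  simp

lemma Hom.snd_congr_arg (f : A ⟶ B) {j j' : B.ι} (h : j = j') :
    f.2 j = eqToHom (by rw [h]) ≫ f.2 j' ≫ eqToHom (by rw [h]) := by
  subst h
  simp

lemma Hom.ext {f g : A ⟶ B} (h : f.1 = g.1) (h' : ∀ j, f.2 j = eqToHom (by rw [h]) ≫ g.2 j) :
    f = g := by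
  obtain ⟨r, φ⟩ := f
  obtain ⟨r', φ'⟩ := g
  obtain rfl : r = r' := h
  simp only [eqToHom_refl, Category.id_comp] at h'
  exact congrArg _ (funext h')

end Hom

variable {J : Type v} [Category.{w} J]

@[ext]
structure IndexSection (F : J ⥤ FormalProd C) : Type v where
  index : ∀ j, (F.obj j).ι
  map_index ⦃j j' : J⦄ (u : j ⟶ j') : (F.map u).1 (index j') = index j

namespace IndexSection

variable {F : J ⥤ FormalProd C}

def diagram (s : IndexSection F) : J ⥤ C where
  obj j := (F.obj j).obj (s.index j)
  map {j j'} u := eqToHom (by rw [s.map_index u]) ≫ (F.map u).2 (s.index j')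
  map_id j := by simp [Hom.congr_snd (F.map_id j)]
  map_comp {j j' j''} u v := by
    simp [Hom.congr_snd (F.map_comp u v), Hom.snd_congr_arg (F.map u) (s.map_index v)]

def ofCocone (c : Cocone F) (k : c.pt.ι) : IndexSection F where
  index j := (c.ι.app j).1 k
  map_index _ _ u := congrFun (congrArg Sigma.fst (c.w u)) k

def coconeOfCocone (c : Cocone F) (k : c.pt.ι) : Cocone (ofCocone c k).diagram where
  pt := c.pt.obj k
  ι.app j := (c.ι.app j).2 k
  ι.naturality _ _ u := by
    simp [diagram, ofCocone, Hom.congr_snd (c.w u).symm k]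

end IndexSection

variable [HasColimitsOfShape J C] (F : J ⥤ FormalProd C)

noncomputable def colimitCocone : Cocone F where
  pt := ⟨IndexSection F, fun s => colimit s.diagram⟩
  ι.app j := ⟨fun s => s.index j, fun s => colimit.ι s.diagram j⟩
  ι.naturality j j' u := Hom.ext (funext fun s => s.map_index u) fun s => by
    dsimp
    rw [← colimit.w s.diagram u]
    simp [IndexSection.diagram]

variable {F}

lemma colimitCocone_hom_ext {X : FormalProd C} {f g : (colimitCocone F).pt ⟶ X}
    (h : ∀ j, (colimitCocone F).ι.app j ≫ f = (colimitCocone F).ι.app j ≫ g) : f = g := by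
  obtain ⟨r, φ⟩ := f
  obtain ⟨r', φ'⟩ := g
  obtain rfl : r = r' := funext fun k => IndexSection.ext <| funext fun j =>
    congrFun (congrArg Sigma.fst (h j)) k
  exact congrArg _ <| funext fun k => colimit.hom_ext fun j =>
    (Hom.congr_snd (h j) k).trans (Category.id_comp _)

noncomputable def colimitDesc (c : Cocone F) : (colimitCocone F).pt ⟶ c.pt :=
  ⟨IndexSection.ofCocone c, fun k => colimit.desc _ (IndexSection.coconeOfCocone c k)⟩

lemma colimitCocone_ι_desc (c : Cocone F) (j : J) :
    (colimitCocone F).ι.app j ≫ colimitDesc c = c.ι.app j :=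
  Hom.ext rfl fun k =>
    (colimit.ι_desc (IndexSection.coconeOfCocone c k) j).trans (Category.id_comp _).symm

noncomputable def isColimitColimitCocone : IsColimit (colimitCocone F) where
  desc := colimitDesc
  fac := colimitCocone_ι_desc
  uniq c _ hm := colimitCocone_hom_ext fun j => (hm j).trans (colimitCocone_ι_desc c j).symm

instance : HasColimitsOfShape J (FormalProd C) :=
  ⟨fun _ => ⟨⟨⟨_, isColimitColimitCocone⟩⟩⟩⟩

end FormalProd

/-- If `C` has all small colimits, then the category `Prod(C)` of formal products of
objects of `C` has all small colimits. -/
theorem formalProd_hasColimits (C : Type u) [Category.{v} C] [HasColimits C] :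
    HasColimits (FormalProd C) :=
  ⟨fun _ _ => inferInstance⟩
end

section
/- Let C be a category with all small colimits. In Prod(C) the coproduct distributes over products: for objects ∏_{i∈I} A_i and ∏_{j∈J} B_j of Prod(C) there is an isomorphism (∏_{i∈I} A_i) ⊔ (∏_{j∈J} B_j) ≅ ∏_{(i,j)∈I×J} (A_i ⊔ B_j), where A_i ⊔ B_j denotes the coproduct in C. -/
/-!
A morphism `∏_i A_i ⊔ ∏_j B_j ⟶ ∏_k T_k` amounts to choosing, for every `k`, an index `i_k`
with a map `A_{i_k} ⟶ T_k` and an index `j_k` with a map `B_{j_k} ⟶ T_k`; that is the same as an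
index `(i_k, j_k) ∈ I × J` with a map `A_{i_k} ⊔ B_{j_k} ⟶ T_k` out of the coproduct in `C`.
-/

open CategoryTheory Limits

universe v u

variable {C : Type u} [Category.{v} C]

/-- The formal product `∏_{(i,j) ∈ I × J} (A_i ⊔ B_j)`. -/
noncomputable def distribObj [HasColimits C] (I J : Type v) (a : I → C) (b : J → C) : FormalProd C :=
  ⟨I × J, fun p => a p.1 ⨿ b p.2⟩

/-- The inclusion `∏_{i ∈ I} A_i ⟶ ∏_{(i,j) ∈ I × J} (A_i ⊔ B_j)`, with index map
`(i, j) ↦ i` and components the coproduct inclusions `A_i ⟶ A_i ⊔ B_j`. -/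
noncomputable def distribInl [HasColimits C] (I J : Type v) (a : I → C) (b : J → C) :
    (⟨I, a⟩ : FormalProd C) ⟶ distribObj I J a b :=
  ⟨fun p => p.1, fun p => coprod.inl⟩

/-- The inclusion `∏_{j ∈ J} B_j ⟶ ∏_{(i,j) ∈ I × J} (A_i ⊔ B_j)`, with index map
`(i, j) ↦ j` and components the coproduct inclusions `B_j ⟶ A_i ⊔ B_j`. -/
noncomputable def distribInr [HasColimits C] (I J : Type v) (a : I → C) (b : J → C) :
    (⟨J, b⟩ : FormalProd C) ⟶ distribObj I J a b :=
  ⟨fun p => p.2, fun p => coprod.inr⟩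

namespace FormalProd

lemma mk_eq_mk {A B : FormalProd C} (r : B.ι → A.ι) {φ ψ : ∀ j, A.obj (r j) ⟶ B.obj j}
    (h : ∀ j, φ j = ψ j) : (⟨r, φ⟩ : A ⟶ B) = ⟨r, ψ⟩ := by
  rw [funext h]

section BinaryCoproduct

variable [HasBinaryCoproducts C] (A B : FormalProd C)

noncomputable def binaryCoprod : FormalProd C :=
  ⟨A.ι × B.ι, fun p => A.obj p.1 ⨿ B.obj p.2⟩

noncomputable def binaryCoprodInl : A ⟶ binaryCoprod A B :=
  ⟨Prod.fst, fun _ => coprod.inl⟩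

noncomputable def binaryCoprodInr : B ⟶ binaryCoprod A B :=
  ⟨Prod.snd, fun _ => coprod.inr⟩

variable {A B}

noncomputable def binaryCoprodDesc {T : FormalProd C} (f : A ⟶ T) (g : B ⟶ T) :
    binaryCoprod A B ⟶ T :=
  ⟨fun k => (f.1 k, g.1 k), fun k => coprod.desc (f.2 k) (g.2 k)⟩

@[simp]
lemma binaryCoprodInl_desc {T : FormalProd C} (f : A ⟶ T) (g : B ⟶ T) :
    binaryCoprodInl A B ≫ binaryCoprodDesc f g = f :=
  mk_eq_mk f.1 fun k => coprod.inl_desc (f.2 k) (g.2 k)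

@[simp]
lemma binaryCoprodInr_desc {T : FormalProd C} (f : A ⟶ T) (g : B ⟶ T) :
    binaryCoprodInr A B ≫ binaryCoprodDesc f g = g :=
  mk_eq_mk g.1 fun k => coprod.inr_desc (f.2 k) (g.2 k)

lemma eq_binaryCoprodDesc {T : FormalProd C} (m : binaryCoprod A B ⟶ T) :
    m = binaryCoprodDesc (binaryCoprodInl A B ≫ m) (binaryCoprodInr A B ≫ m) :=
  mk_eq_mk m.1 fun _ => coprod.hom_ext (coprod.inl_desc _ _).symm (coprod.inr_desc _ _).symm

variable (A B)

noncomputable def isColimitBinaryCoprod :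
    IsColimit (BinaryCofan.mk (binaryCoprodInl A B) (binaryCoprodInr A B)) :=
  BinaryCofan.IsColimit.mk _ binaryCoprodDesc binaryCoprodInl_desc binaryCoprodInr_desc
    fun _ _ m hl hr => by subst hl hr; exact eq_binaryCoprodDesc m

end BinaryCoproduct

end FormalProd

/-- In `Prod(C)` the coproduct distributes over products: the formal product
`∏_{(i,j) ∈ I × J} (A_i ⊔ B_j)`, equipped with the evident inclusion morphisms,
is a coproduct of `∏_{i ∈ I} A_i` and `∏_{j ∈ J} B_j` in `Prod(C)`; in particular
`(∏_{i∈I} A_i) ⊔ (∏_{j∈J} B_j) ≅ ∏_{(i,j)∈I×J} (A_i ⊔ B_j)`. -/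
theorem formalProd_coprod_distrib (C : Type u) [Category.{v} C] [HasColimits C]
    (I J : Type v) (a : I → C) (b : J → C) :
    Nonempty (IsColimit (BinaryCofan.mk (distribInl I J a b) (distribInr I J a b))) :=
  ⟨FormalProd.isColimitBinaryCoprod ⟨I, a⟩ ⟨J, b⟩⟩
end

section
/- Let C be a closed model category. Then fibrations in Prod(C) are closed under composition: if f : A → B and g : B → C are fibrations in Prod(C), then g ∘ f is a fibration in Prod(C). -/
open CategoryTheory Limits

universe v u

/-- A closed model category structure on `C` (Quillen): three classes of morphisms—
cofibrations, fibrations and weak equivalences—each containing the identities and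
closed under composition and retracts; weak equivalences satisfy two-out-of-three;
(acyclic) cofibrations have the left lifting property with respect to (acyclic)
fibrations; and every morphism factors as a cofibration followed by an acyclic
fibration and as an acyclic cofibration followed by a fibration.  (The requirement
that `C` have all small limits and colimits is imposed separately via
`HasLimits C` and `HasColimits C`.) -/
structure ClosedModelStructure (C : Type u) [Category.{v} C] where
  cof : MorphismProperty C
  fib : MorphismProperty C
  weq : MorphismProperty C
  cof_id : ∀ X : C, cof (𝟙 X)
  fib_id : ∀ X : C, fib (𝟙 X)
  weq_id : ∀ X : C, weq (𝟙 X)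
  cof_comp : ∀ {X Y Z : C} (f : X ⟶ Y) (g : Y ⟶ Z), cof f → cof g → cof (f ≫ g)
  fib_comp : ∀ {X Y Z : C} (f : X ⟶ Y) (g : Y ⟶ Z), fib f → fib g → fib (f ≫ g)
  weq_comp : ∀ {X Y Z : C} (f : X ⟶ Y) (g : Y ⟶ Z), weq f → weq g → weq (f ≫ g)
  weq_of_comp_right : ∀ {X Y Z : C} (f : X ⟶ Y) (g : Y ⟶ Z),
    weq f → weq (f ≫ g) → weq g
  weq_of_comp_left : ∀ {X Y Z : C} (f : X ⟶ Y) (g : Y ⟶ Z),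
    weq g → weq (f ≫ g) → weq f
  cof_retract : ∀ {A A' B B' : C} (f : A ⟶ A') (g : B ⟶ B')
    (i : A ⟶ B) (r : B ⟶ A) (i' : A' ⟶ B') (r' : B' ⟶ A'),
    i ≫ r = 𝟙 A → i' ≫ r' = 𝟙 A' → i ≫ g = f ≫ i' → r ≫ f = g ≫ r' →
    cof g → cof f
  fib_retract : ∀ {A A' B B' : C} (f : A ⟶ A') (g : B ⟶ B')
    (i : A ⟶ B) (r : B ⟶ A) (i' : A' ⟶ B') (r' : B' ⟶ A'),
    i ≫ r = 𝟙 A → i' ≫ r' = 𝟙 A' → i ≫ g = f ≫ i' → r ≫ f = g ≫ r' →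
    fib g → fib f
  weq_retract : ∀ {A A' B B' : C} (f : A ⟶ A') (g : B ⟶ B')
    (i : A ⟶ B) (r : B ⟶ A) (i' : A' ⟶ B') (r' : B' ⟶ A'),
    i ≫ r = 𝟙 A → i' ≫ r' = 𝟙 A' → i ≫ g = f ≫ i' → r ≫ f = g ≫ r' →
    weq g → weq f
  lift_cof_acyclicFib : ∀ {A B X Y : C} (f : A ⟶ B) (g : X ⟶ Y) (u : A ⟶ X)
    (v : B ⟶ Y), cof f → fib g → weq g → u ≫ g = f ≫ v →
    ∃ h : B ⟶ X, f ≫ h = u ∧ h ≫ g = v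
  lift_acyclicCof_fib : ∀ {A B X Y : C} (f : A ⟶ B) (g : X ⟶ Y) (u : A ⟶ X)
    (v : B ⟶ Y), cof f → weq f → fib g → u ≫ g = f ≫ v →
    ∃ h : B ⟶ X, f ≫ h = u ∧ h ≫ g = v
  fact_cof_acyclicFib : ∀ {X Y : C} (f : X ⟶ Y),
    ∃ (Z : C) (i : X ⟶ Z) (p : Z ⟶ Y), cof i ∧ fib p ∧ weq p ∧ i ≫ p = f
  fact_acyclicCof_fib : ∀ {X Y : C} (f : X ⟶ Y),
    ∃ (Z : C) (i : X ⟶ Z) (p : Z ⟶ Y), cof i ∧ weq i ∧ fib p ∧ i ≫ p = f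

namespace FormalProd

variable {C : Type u} [Category.{v} C]

/-- A morphism of `Prod(C)` is a *cofibration* if all of its components are
cofibrations in `C`. -/
def prodCof (M : ClosedModelStructure C) : MorphismProperty (FormalProd C) :=
  fun _ B f => ∀ j : B.ι, M.cof (f.2 j)

/-- A morphism of `Prod(C)` is a *weak equivalence* if its index map is a bijection
and all of its components are weak equivalences in `C`. -/
def prodWeq (M : ClosedModelStructure C) : MorphismProperty (FormalProd C) :=
  fun _ B f => Function.Bijective f.1 ∧ ∀ j : B.ι, M.weq (f.2 j)

/-- For a morphism `f : ∏_{i∈I} A_i ⟶ ∏_{j∈J} B_j` of `Prod(C)` and `i ∈ I`, the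
induced morphism `f^i : A_i ⟶ ∏ { B_j | i_j = i }` into the product in `C` of the
`B_j` over those `j` with `i_j = i`, whose components are the `f_j` with `i_j = i`. -/
noncomputable def fiberMap [HasLimits C] {A B : FormalProd C} (f : A ⟶ B) (i : A.ι) :
    A.obj i ⟶ ∏ᶜ (fun j : {j : B.ι // f.1 j = i} => B.obj j.1) :=
  Pi.lift fun j => eqToHom (congrArg A.obj j.2.symm) ≫ f.2 j.1

/-- A morphism `f` of `Prod(C)` is a *fibration* if for every index `i` of the source
the induced morphism `f^i` is a fibration in `C`. -/
def prodFib [HasLimits C] (M : ClosedModelStructure C) :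
    MorphismProperty (FormalProd C) :=
  fun A _ f => ∀ i : A.ι, M.fib (fiberMap f i)

end FormalProd

section Aux

variable {C : Type u} [Category.{v} C] (M : ClosedModelStructure C)

/-- A morphism with the right lifting property against all acyclic cofibrations
is a fibration (retract argument). -/
lemma fib_of_rlp {X Y : C} (ψ : X ⟶ Y)
    (H : ∀ {P Q : C} (u : P ⟶ Q) (a : P ⟶ X) (b : Q ⟶ Y),
      M.cof u → M.weq u → a ≫ ψ = u ≫ b → ∃ h : Q ⟶ X, u ≫ h = a ∧ h ≫ ψ = b) :
    M.fib ψ := by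
  obtain ⟨Z, i, p, hic, hiw, hpf, hfact⟩ := M.fact_acyclicCof_fib ψ
  obtain ⟨h, h1, h2⟩ := H i (𝟙 X) p hic hiw (by simp [hfact])
  exact M.fib_retract ψ p i h (𝟙 Y) (𝟙 Y) h1 (by simp) (by simp [hfact])
    (by simp [h2]) hpf

/-- Isomorphisms are fibrations. -/
lemma fib_of_iso {X Y : C} (e : X ≅ Y) : M.fib e.hom :=
  M.fib_retract e.hom (𝟙 X) (𝟙 X) (𝟙 X) e.inv e.hom (by simp) (by simp) (by simp)
    (by simp) (M.fib_id X)

variable [HasLimits C]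

/-- A "formal product"-style morphism between products in `C`, all of whose
induced fiber maps are fibrations, is a fibration. -/
lemma fib_piLift {J K : Type v} (r : K → J) (X : J → C) (Y : K → C)
    (comps : ∀ k, X (r k) ⟶ Y k)
    (hfib : ∀ j, M.fib (Pi.lift (fun k : {k : K // r k = j} =>
      eqToHom (congrArg X k.2.symm) ≫ comps k.1) : X j ⟶ _)) :
    M.fib (Pi.lift (fun k => Pi.π X (r k) ≫ comps k) : ∏ᶜ X ⟶ ∏ᶜ Y) := by
  apply fib_of_rlp M
  intro P Q u a b hc hw hsq
  have lifts : ∀ j, ∃ h : Q ⟶ X j, u ≫ h = a ≫ Pi.π X j ∧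
      h ≫ (Pi.lift (fun k : {k : K // r k = j} =>
          eqToHom (congrArg X k.2.symm) ≫ comps k.1))
        = Pi.lift (fun k : {k : K // r k = j} => b ≫ Pi.π Y k.1) := by
    intro j
    apply M.lift_acyclicCof_fib u _ _ _ hc hw (hfib j)
    apply limit.hom_ext
    intro ⟨⟨k, hk⟩⟩
    subst hk
    have := congrArg (fun t => t ≫ Pi.π Y k) hsq
    simpa using this
  choose h h1 h2 using lifts
  refine ⟨Pi.lift h, ?_, ?_⟩
  · apply limit.hom_ext
    intro ⟨j⟩
    simpa using h1 j
  · apply limit.hom_ext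
    intro ⟨k⟩
    have := congrArg (fun t => t ≫ Pi.π _ (⟨k, rfl⟩ : {k' : K // r k' = r k})) (h2 (r k))
    simpa using this

end Aux

open FormalProd in
/-- Fibrations in `Prod(C)` are closed under composition. -/
theorem formalProd_fib_comp (C : Type u) [Category.{v} C]
    [HasLimits C] [HasColimits C] (M : ClosedModelStructure C)
    {A B D : FormalProd C} (f : A ⟶ B) (g : B ⟶ D)
    (hf : prodFib M f) (hg : prodFib M g) : prodFib M (f ≫ g) := by
  intro i
  let r : {k : D.ι // (f ≫ g).1 k = i} → {j : B.ι // f.1 j = i} :=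
    fun k => ⟨g.1 k.1, k.2⟩
  have key : fiberMap (f ≫ g) i =
      fiberMap f i ≫ Pi.lift (fun k : {k : D.ι // (f ≫ g).1 k = i} =>
        Pi.π (fun j : {j : B.ι // f.1 j = i} => B.obj j.1) (r k) ≫ g.2 k.1) := by
    apply limit.hom_ext
    intro ⟨k⟩
    show _ = _
    simp only [fiberMap, Category.assoc, limit.lift_π, Fan.mk_π_app,
      limit.lift_π_assoc]
    rfl
  rw [key]
  refine M.fib_comp _ _ (hf i) ?_
  apply fib_piLift
  rintro ⟨j0, hj0⟩
  -- reindex the fibers of `g` over `j0`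
  let e : {k' : D.ι // g.1 k' = j0} ≃
      {k : {k : D.ι // (f ≫ g).1 k = i} // r k = ⟨j0, hj0⟩} :=
    { toFun := fun k' => ⟨⟨k'.1, by
        show f.1 (g.1 k'.1) = i
        rw [k'.2]; exact hj0⟩, Subtype.ext k'.2⟩
      invFun := fun k => ⟨k.1.1, congrArg Subtype.val k.2⟩
      left_inv := fun k' => rfl
      right_inv := fun k => by
        apply Subtype.ext; apply Subtype.ext; rfl }
  have heq : (Pi.lift (fun k : {k : {k : D.ι // (f ≫ g).1 k = i} //
          r k = ⟨j0, hj0⟩} =>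
        eqToHom (congrArg (fun j : {j : B.ι // f.1 j = i} => B.obj j.1) k.2.symm)
          ≫ g.2 k.1.1)) =
      fiberMap g j0 ≫ (Pi.whiskerEquiv e
        (fun k' => Iso.refl (D.obj k'.1))).hom := by
    apply limit.hom_ext
    rintro ⟨⟨⟨k1, hk1⟩, hk2⟩⟩
    have hg1 : g.1 k1 = j0 := congrArg Subtype.val hk2
    subst hg1
    simp [fiberMap, e, Pi.whiskerEquiv, Pi.map']
  rw [heq]
  exact M.fib_comp _ _ (hg j0) (fib_of_iso M _)
end

section
/- Let C be a closed model category. Suppose in Prod(C) a morphism f : A → A' is a retract of a morphism g : B → B', i.e., there are morphisms ι : A → B, ρ : B → A with ρ ∘ ι = 1_A and ι' : A' → B', ρ' : B' → A' with ρ' ∘ ι' = 1_{A'}, such that g ∘ ι = ι' ∘ f and f ∘ ρ = ρ' ∘ g. If g is a cofibration in Prod(C) then so is f, and if g is a weak equivalence in Prod(C) then so is f. -/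
open CategoryTheory Limits

universe v u

namespace FormalProd

variable {C : Type u} [Category.{v} C]

theorem hom_index_eq {A B : FormalProd C} {F G : A ⟶ B} (h : F = G) (j : B.ι) :
    F.1 j = G.1 j := by rw [h]

theorem hom_comp_eq {A B : FormalProd C} {F G : A ⟶ B} (h : F = G) (j : B.ι) :
    F.2 j = eqToHom (congrArg A.obj (hom_index_eq h j)) ≫ G.2 j := by
  subst h; simp

theorem comp_shift {A B : FormalProd C} (F : A ⟶ B) {j j' : B.ι} (h : j = j') :
    F.2 j = eqToHom (congrArg (fun t => A.obj (F.1 t)) h) ≫ F.2 j' ≫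
      eqToHom (congrArg B.obj h.symm) := by
  subst h; simp

end FormalProd

open FormalProd in
/-- If a morphism `f : A ⟶ A'` of `Prod(C)` is a retract of a morphism `g : B ⟶ B'`
(via `i : A ⟶ B`, `r : B ⟶ A`, `i' : A' ⟶ B'`, `r' : B' ⟶ A'` with `r ∘ i = 1`,
`r' ∘ i' = 1`, `g ∘ i = i' ∘ f` and `f ∘ r = r' ∘ g`), then: if `g` is a cofibration
so is `f`, and if `g` is a weak equivalence so is `f`. -/
theorem formalProd_cof_weq_retract (C : Type u) [Category.{v} C]
    [HasLimits C] [HasColimits C] (M : ClosedModelStructure C)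
    {A A' B B' : FormalProd C} (f : A ⟶ A') (g : B ⟶ B')
    (i : A ⟶ B) (r : B ⟶ A) (i' : A' ⟶ B') (r' : B' ⟶ A')
    (hir : i ≫ r = 𝟙 A) (hir' : i' ≫ r' = 𝟙 A')
    (hsq₁ : i ≫ g = f ≫ i') (hsq₂ : r ≫ f = g ≫ r') :
    (prodCof M g → prodCof M f) ∧ (prodWeq M g → prodWeq M f) := by
  have hi : ∀ a : A.ι, i.1 (r.1 a) = a := fun a => hom_index_eq hir a
  have hi' : ∀ a : A'.ι, i'.1 (r'.1 a) = a := fun a => hom_index_eq hir' a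
  have hs1 : ∀ k : B'.ι, i.1 (g.1 k) = f.1 (i'.1 k) := fun k => hom_index_eq hsq₁ k
  have hs2 : ∀ j : A'.ι, r.1 (f.1 j) = g.1 (r'.1 j) := fun j => hom_index_eq hsq₂ j
  have key : ∀ (P : MorphismProperty C),
      (∀ {X X' Y Y' : C} (φ : X ⟶ X') (ψ : Y ⟶ Y')
        (u : X ⟶ Y) (v : Y ⟶ X) (u' : X' ⟶ Y') (v' : Y' ⟶ X'),
        u ≫ v = 𝟙 X → u' ≫ v' = 𝟙 X' → u ≫ ψ = φ ≫ u' → v ≫ φ = ψ ≫ v' →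
        P ψ → P φ) →
      ∀ j : A'.ι, P (g.2 (r'.1 j)) → P (f.2 j) := by
    intro P hP j hg
    have e1 : i'.1 (r'.1 j) = j := hi' j
    have e3 : r.1 (f.1 j) = g.1 (r'.1 j) := hs2 j
    have dA : f.1 j = i.1 (g.1 (r'.1 j)) := by rw [← e3]; exact (hi (f.1 j)).symm
    have h1 : i.2 (r.1 (f.1 j)) ≫ r.2 (f.1 j)
        = eqToHom (congrArg A.obj (hi (f.1 j))) ≫ 𝟙 (A.obj (f.1 j)) :=
      hom_comp_eq hir (f.1 j)
    have h2 : i'.2 (r'.1 j) ≫ r'.2 j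
        = eqToHom (congrArg A'.obj (hi' j)) ≫ 𝟙 (A'.obj j) :=
      hom_comp_eq hir' j
    have h3 : i.2 (g.1 (r'.1 j)) ≫ g.2 (r'.1 j)
        = eqToHom (congrArg A.obj (hs1 (r'.1 j))) ≫ f.2 (i'.1 (r'.1 j)) ≫ i'.2 (r'.1 j) :=
      hom_comp_eq hsq₁ (r'.1 j)
    have h4 : r.2 (f.1 j) ≫ f.2 j
        = eqToHom (congrArg B.obj (hs2 j)) ≫ g.2 (r'.1 j) ≫ r'.2 j :=
      hom_comp_eq hsq₂ j
    refine hP (f.2 j) (g.2 (r'.1 j))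
      (eqToHom (congrArg A.obj dA) ≫ i.2 (g.1 (r'.1 j)))
      (eqToHom (congrArg B.obj e3.symm) ≫ r.2 (f.1 j))
      (eqToHom (congrArg A'.obj e1.symm) ≫ i'.2 (r'.1 j))
      (r'.2 j) ?_ ?_ ?_ ?_ hg
    · rw [comp_shift i e3.symm]
      simp [h1]
    · simp [h2]
    · rw [Category.assoc, h3, comp_shift f e1.symm]
      simp
    · rw [Category.assoc, h4]
      simp
  constructor
  · intro hg j
    exact key M.cof (fun φ ψ u v u' v' h1 h2 h3 h4 hψ =>
      M.cof_retract φ ψ u v u' v' h1 h2 h3 h4 hψ) j (hg _)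
  · intro hg
    refine ⟨⟨?_, ?_⟩, fun j => key M.weq (fun φ ψ u v u' v' h1 h2 h3 h4 hψ =>
      M.weq_retract φ ψ u v u' v' h1 h2 h3 h4 hψ) j (hg.2 _)⟩
    · intro j₁ j₂ h
      have h' : g.1 (r'.1 j₁) = g.1 (r'.1 j₂) := by
        rw [← hs2, ← hs2, h]
      have := hg.1.1 h'
      rw [← hi' j₁, ← hi' j₂, this]
    · intro a
      obtain ⟨k, hk⟩ := hg.1.2 (r.1 a)
      exact ⟨i'.1 k, by rw [← hs1 k, hk, hi a]⟩
end

section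
/- Let C be a closed model category. Suppose in Prod(C) a morphism f : A → A' is a retract of a morphism g : B → B', i.e., there are morphisms ι : A → B, ρ : B → A with ρ ∘ ι = 1_A and ι' : A' → B', ρ' : B' → A' with ρ' ∘ ι' = 1_{A'}, such that g ∘ ι = ι' ∘ f and f ∘ ρ = ρ' ∘ g. If g is a fibration in Prod(C) then so is f. -/
open CategoryTheory Limits

universe v u

section RetractHelpers

variable {C : Type u} [Category.{v} C]

lemma FormalProd.hom_eq_index {A B : FormalProd C} {p q : A ⟶ B} (h : p = q) (j : B.ι) :
    p.1 j = q.1 j := by rw [h]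

lemma FormalProd.hom_eq_component {A B : FormalProd C} {p q : A ⟶ B} (h : p = q) (j : B.ι) :
    p.2 j = eqToHom (congrArg A.obj (FormalProd.hom_eq_index h j)) ≫ q.2 j := by
  subst h; simp

lemma FormalProd.eq_id_component {A : FormalProd C} {u : A ⟶ A} (h : u = 𝟙 A) (x : A.ι) :
    u.2 x = eqToHom (congrArg A.obj (FormalProd.hom_eq_index h x)) := by
  subst h; exact (eqToHom_refl _ _).symm

lemma fam_congr {ι : Type*} {F G : ι → C} (φ : ∀ x, F x ⟶ G x) {x y : ι} (e : x = y) :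
    φ x = eqToHom (congrArg F e) ≫ φ y ≫ eqToHom (congrArg G e.symm) := by subst e; simp

lemma pi_π_eqToHom [HasLimits C] {α : Type v} (F : α → C) {s t : α} (e : s = t) :
    Pi.π F s ≫ eqToHom (congrArg F e) = Pi.π F t := by subst e; simp

end RetractHelpers

open FormalProd in
/-- If a morphism `f : A ⟶ A'` of `Prod(C)` is a retract of a morphism `g : B ⟶ B'`
(via `i : A ⟶ B`, `r : B ⟶ A`, `i' : A' ⟶ B'`, `r' : B' ⟶ A'` with `r ∘ i = 1`,
`r' ∘ i' = 1`, `g ∘ i = i' ∘ f` and `f ∘ r = r' ∘ g`) and `g` is a fibration, then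
`f` is a fibration. -/
theorem formalProd_fib_retract (C : Type u) [Category.{v} C]
    [HasLimits C] [HasColimits C] (M : ClosedModelStructure C)
    {A A' B B' : FormalProd C} (f : A ⟶ A') (g : B ⟶ B')
    (i : A ⟶ B) (r : B ⟶ A) (i' : A' ⟶ B') (r' : B' ⟶ A')
    (hir : i ≫ r = 𝟙 A) (hir' : i' ≫ r' = 𝟙 A')
    (hsq₁ : i ≫ g = f ≫ i') (hsq₂ : r ≫ f = g ≫ r')
    (hg : prodFib M g) : prodFib M f := by
  intro a
  have hIdx : ∀ x : A.ι, i.1 (r.1 x) = x := fun x => FormalProd.hom_eq_index hir x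
  have hIdx' : ∀ x : A'.ι, i'.1 (r'.1 x) = x := fun x => FormalProd.hom_eq_index hir' x
  have hsqIdx₁ : ∀ k : B'.ι, i.1 (g.1 k) = f.1 (i'.1 k) :=
    fun k => FormalProd.hom_eq_index hsq₁ k
  have hsqIdx₂ : ∀ j : A'.ι, r.1 (f.1 j) = g.1 (r'.1 j) :=
    fun j => FormalProd.hom_eq_index hsq₂ j
  set b : B.ι := r.1 a with hb
  have pfK : ∀ k : {k : B'.ι // g.1 k = b}, f.1 (i'.1 k.1) = a := fun k => by
    rw [← hsqIdx₁, k.2]; exact hIdx a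
  have pfJ : ∀ j : {j : A'.ι // f.1 j = a}, g.1 (r'.1 j.1) = b := fun j => by
    rw [← hsqIdx₂, j.2]
  -- the retract data in C
  refine M.fib_retract (fiberMap f a) (fiberMap g b)
    (eqToHom (congrArg A.obj (hIdx a).symm) ≫ i.2 b) (r.2 a)
    (Pi.lift fun k => Pi.π _ (⟨i'.1 k.1, pfK k⟩ : {j : A'.ι // f.1 j = a}) ≫ i'.2 k.1)
    (Pi.lift fun j => Pi.π _ (⟨r'.1 j.1, pfJ j⟩ : {k : B'.ι // g.1 k = b}) ≫ r'.2 j.1)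
    ?_ ?_ ?_ ?_ (hg b)
  · have h1 : i.2 (r.1 a) ≫ r.2 a = eqToHom (congrArg A.obj (hIdx a)) :=
      FormalProd.eq_id_component hir a
    rw [Category.assoc, h1, eqToHom_trans, eqToHom_refl]
  · apply Pi.hom_ext
    intro j
    simp only [limit.lift_π, Fan.mk_π_app, Category.assoc, Category.id_comp]
    rw [limit.lift_π_assoc]
    simp only [Fan.mk_π_app, Category.assoc]
    have h1 : i'.2 (r'.1 j.1) ≫ r'.2 j.1 = eqToHom (congrArg A'.obj (hIdx' j.1)) :=
      FormalProd.eq_id_component hir' j.1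
    rw [h1]
    have : (⟨i'.1 (r'.1 j.1), pfK ⟨r'.1 j.1, pfJ j⟩⟩ : {j : A'.ι // f.1 j = a}) = j :=
      Subtype.ext (hIdx' j.1)
    exact pi_π_eqToHom (fun j : {j : A'.ι // f.1 j = a} => A'.obj j.1) this
  · apply Pi.hom_ext
    intro k
    simp only [fiberMap, limit.lift_π, Fan.mk_π_app, Category.assoc]
    rw [limit.lift_π_assoc]
    simp only [Fan.mk_π_app]
    have h1 := FormalProd.hom_eq_component hsq₁ k.1
    change i.2 (g.1 k.1) ≫ g.2 k.1 =
      eqToHom _ ≫ f.2 (i'.1 k.1) ≫ i'.2 k.1 at h1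
    have h2 := fam_congr (F := fun x : B.ι => A.obj (i.1 x)) (G := B.obj) i.2 k.2
    rw [h2] at h1
    simp only [Category.assoc] at h1 ⊢
    rw [eqToHom_comp_iff] at h1
    rw [h1]
    simp [eqToHom_trans_assoc]
  · apply Pi.hom_ext
    intro j
    simp only [fiberMap, limit.lift_π, Fan.mk_π_app, Category.assoc]
    rw [limit.lift_π_assoc]
    simp only [Fan.mk_π_app]
    have h1 := FormalProd.hom_eq_component hsq₂ j.1
    change r.2 (f.1 j.1) ≫ f.2 j.1 =
      eqToHom _ ≫ g.2 (r'.1 j.1) ≫ r'.2 j.1 at h1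
    have h2 := fam_congr (F := fun x : A.ι => B.obj (r.1 x)) (G := A.obj) r.2 j.2
    rw [h2] at h1
    simp only [Category.assoc] at h1 ⊢
    rw [eqToHom_comp_iff] at h1
    rw [h1]
    simp [eqToHom_trans_assoc]
end

section
/- Let C be a closed model category. Given a commutative square in Prod(C) with left vertical morphism f a cofibration and right vertical morphism g an acyclic fibration (a fibration which is also a weak equivalence), there exists a diagonal morphism h from the bottom-left object to the top-right object making both triangles commute. That is, cofibrations in Prod(C) have the left lifting property with respect to acyclic fibrations. -/
open CategoryTheory Limits

universe v u

/-!
The index map of an acyclic fibration `g` of `Prod(C)` is a bijection, so each fibre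
`{j | i_j = i}` is a singleton and every component `g_j` is a retract of the fibration `g^{i_j}`;
hence every component of `g` is an acyclic fibration of `C`. The commutative square then splits
into one square in `C` per index of the target of `g`, and the lifts of these squares, reindexed
along the bijection, assemble into the diagonal.
-/

namespace ClosedModelStructure

variable {C : Type u} [Category.{v} C] (M : ClosedModelStructure C)

/-- `p` is a retract of `p ≫ s` in the arrow category. -/
lemma fib_of_fib_comp_splitMono {X Y Y' : C} {p : X ⟶ Y} {s : Y ⟶ Y'} (hps : M.fib (p ≫ s))
    (hs : SplitMono s) : M.fib p :=
  M.fib_retract p (p ≫ s) (𝟙 X) (𝟙 X) s hs.retraction (Category.id_comp _) hs.id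
    (Category.id_comp _) (by simp [hs.id]) hps

lemma exists_lift_of_sigma_eq {ι : Type*} {F : ι → C} {B X Y : C} (s : Σ i, F i ⟶ X)
    (c : Σ i, F i ⟶ B) (p : X ⟶ Y) (q : B ⟶ Y) (hc : M.cof c.2) (hp : M.fib p)
    (hp' : M.weq p) (hsq : (⟨s.1, s.2 ≫ p⟩ : Σ i, F i ⟶ Y) = ⟨c.1, c.2 ≫ q⟩) :
    ∃ ℓ : B ⟶ X, (⟨c.1, c.2 ≫ ℓ⟩ : Σ i, F i ⟶ X) = s ∧ ℓ ≫ p = q := by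
  obtain ⟨i, a⟩ := s
  obtain ⟨i', c⟩ := c
  obtain ⟨rfl, hac⟩ := Sigma.mk.inj_iff.1 hsq
  obtain ⟨ℓ, hcℓ, hℓp⟩ := M.lift_cof_acyclicFib c p a q hc hp hp' (eq_of_heq hac)
  exact ⟨ℓ, by rw [hcℓ], hℓp⟩

end ClosedModelStructure

namespace FormalProd

variable {C : Type u} [Category.{v} C]

/-- A morphism `A ⟶ B` is a family over `B.ι` of such pairs; comparing pairs rather than index
maps and components avoids transporting components along equalities of indices. -/
def entry {A B : FormalProd C} (p : A ⟶ B) (j : B.ι) : Σ i, A.obj i ⟶ B.obj j :=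
  ⟨p.1 j, p.2 j⟩

def homOfEntries {A B : FormalProd C} (φ : ∀ j, Σ i, A.obj i ⟶ B.obj j) : A ⟶ B :=
  ⟨fun j => (φ j).1, fun j => (φ j).2⟩

lemma hom_ext_of_entry {A B : FormalProd C} {p q : A ⟶ B} (h : ∀ j, entry p j = entry q j) :
    p = q := by
  obtain ⟨r, φ⟩ := p
  obtain ⟨r', φ'⟩ := q
  obtain rfl : r = r' := funext fun j => congrArg Sigma.fst (h j)
  exact congrArg (Sigma.mk r) (funext fun j => eq_of_heq (Sigma.mk.inj_iff.1 (h j)).2)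

lemma entry_comp {A B D : FormalProd C} (p : A ⟶ B) (q : B ⟶ D) (k : D.ι) :
    entry (p ≫ q) k = ⟨p.1 (entry q k).1, p.2 (entry q k).1 ≫ (entry q k).2⟩ :=
  rfl

lemma entry_comp' {A B D : FormalProd C} (p : A ⟶ B) (q : B ⟶ D) (k : D.ι) :
    entry (p ≫ q) k = ⟨(entry p (q.1 k)).1, (entry p (q.1 k)).2 ≫ q.2 k⟩ :=
  rfl

lemma fiberMap_eq_comp_of_injective [HasLimits C] {A B : FormalProd C} (g : A ⟶ B)
    (hg : Function.Injective g.1) (k : B.ι) :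
    fiberMap g (g.1 k) =
      g.2 k ≫ Pi.lift fun j : {j // g.1 j = g.1 k} => eqToHom (congrArg B.obj (hg j.2).symm) := by
  ext ⟨j, hj⟩
  obtain rfl := hg hj
  simp [fiberMap]

lemma fib_component_of_prodFib [HasLimits C] {M : ClosedModelStructure C} {A B : FormalProd C}
    {g : A ⟶ B} (hg : prodFib M g) (hinj : Function.Injective g.1) (k : B.ι) :
    M.fib (g.2 k) := by
  have hfib := hg (g.1 k)
  rw [fiberMap_eq_comp_of_injective g hinj] at hfib
  exact M.fib_of_fib_comp_splitMono hfib
    ⟨Pi.π (fun j : {j // g.1 j = g.1 k} => B.obj j.1) ⟨k, rfl⟩, by simp⟩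

end FormalProd

open FormalProd in
theorem formalProd_llp_cof_acyclicFib_general (C : Type u) [Category.{v} C]
    [HasLimits C] (M : ClosedModelStructure C)
    {A B X Y : FormalProd C} (f : A ⟶ B) (g : X ⟶ Y) (u : A ⟶ X) (v : B ⟶ Y)
    (hf : prodCof M f) (hg : prodFib M g) (hg' : prodWeq M g)
    (hsq : u ≫ g = f ≫ v) :
    ∃ h : B ⟶ X, f ≫ h = u ∧ h ≫ g = v := by
  obtain ⟨hbij, hweq⟩ := hg'
  choose ℓ hℓu hℓv using fun k => M.exists_lift_of_sigma_eq (entry u (g.1 k)) (entry f (v.1 k))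
    (g.2 k) (v.2 k) (hf _) (fib_component_of_prodFib hg hbij.1 k) (hweq k)
    (congrArg (entry · k) hsq)
  let e := Equiv.ofBijective g.1 hbij
  let h : B ⟶ X := homOfEntries <|
    e.piCongrLeft (fun x => Σ b, B.obj b ⟶ X.obj x) fun k => ⟨v.1 k, ℓ k⟩
  have hh (k : Y.ι) : entry h (g.1 k) = ⟨v.1 k, ℓ k⟩ :=
    e.piCongrLeft_apply_apply (fun x => Σ b, B.obj b ⟶ X.obj x) (fun j => ⟨v.1 j, ℓ j⟩) k
  refine ⟨h, hom_ext_of_entry fun x => ?_, hom_ext_of_entry fun k => ?_⟩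
  · obtain ⟨k, rfl⟩ := hbij.2 x
    rw [entry_comp, hh]
    exact hℓu k
  · rw [entry_comp', hh, hℓv]
    rfl

open FormalProd in
/-- Cofibrations in `Prod(C)` have the left lifting property with respect to acyclic
fibrations: given a commutative square `u ≫ g = f ≫ v` with `f` a cofibration and
`g` a fibration which is also a weak equivalence, there is a diagonal `h` making
both triangles commute. -/
theorem formalProd_llp_cof_acyclicFib (C : Type u) [Category.{v} C]
    [HasLimits C] [HasColimits C] (M : ClosedModelStructure C)
    {A B X Y : FormalProd C} (f : A ⟶ B) (g : X ⟶ Y) (u : A ⟶ X) (v : B ⟶ Y)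
    (hf : prodCof M f) (hg : prodFib M g) (hg' : prodWeq M g)
    (hsq : u ≫ g = f ≫ v) :
    ∃ h : B ⟶ X, f ≫ h = u ∧ h ≫ g = v :=
  formalProd_llp_cof_acyclicFib_general C M f g u v hf hg hg' hsq
end

section
/- Let C be a closed model category. Given a commutative square in Prod(C) with left vertical morphism f an acyclic cofibration (a cofibration which is also a weak equivalence) and right vertical morphism g a fibration, there exists a diagonal morphism h from the bottom-left object to the top-right object making both triangles commute. That is, acyclic cofibrations in Prod(C) have the left lifting property with respect to fibrations. -/
/-!
The index map of an acyclic cofibration `f` is bijective, so the index map of any lift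
in a square `u ≫ g = f ≫ v` is forced to be `f₁⁻¹ ∘ u₁`. With that choice the square
splits into one square in `C` for each index `x` of `X`, with a component of `f` on the
left and the fiber map `g^x` on the right, and each of these is solved by the lifting
axiom of the model structure on `C`.
-/

open CategoryTheory Limits

universe v u

namespace FormalProd

variable {C : Type u} [Category.{v} C]

@[simp]
theorem comp_fst {A B D : FormalProd C} (p : A ⟶ B) (q : B ⟶ D) (k : D.ι) :
    (p ≫ q).1 k = p.1 (q.1 k) :=
  rfl

@[simp]
theorem comp_snd_s9 {A B D : FormalProd C} (p : A ⟶ B) (q : B ⟶ D) (k : D.ι) :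
    (p ≫ q).2 k = p.2 (q.1 k) ≫ q.2 k :=
  rfl

theorem hom_ext_s9 {A B : FormalProd C} {p q : A ⟶ B} (h₁ : ∀ j, p.1 j = q.1 j)
    (h₂ : ∀ j, p.2 j = eqToHom (congrArg A.obj (h₁ j)) ≫ q.2 j) : p = q := by
  obtain ⟨r, φ⟩ := p
  obtain ⟨s, ψ⟩ := q
  obtain rfl : r = s := funext h₁
  exact congrArg (Sigma.mk r) (funext fun j => by simpa using h₂ j)

theorem index_eq_of_eq {A B : FormalProd C} {p q : A ⟶ B} (h : p = q) (j : B.ι) :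
    p.1 j = q.1 j := by
  rw [h]

theorem component_eq_of_eq {A B : FormalProd C} {p q : A ⟶ B} (h : p = q) (j : B.ι) :
    p.2 j = eqToHom (congrArg A.obj (index_eq_of_eq h j)) ≫ q.2 j := by
  subst h; simp

theorem component_comp_eqToHom {A B : FormalProd C} (f : A ⟶ B) {b b' : B.ι} (e : b = b') :
    f.2 b ≫ eqToHom (congrArg B.obj e) =
      eqToHom (congrArg A.obj (congrArg f.1 e)) ≫ f.2 b' := by
  subst e; simp

section FiberMap

variable [HasLimits C]

@[simp]
theorem fiberMap_π {A B : FormalProd C} (f : A ⟶ B) (i : A.ι) (j : {j : B.ι // f.1 j = i}) :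
    fiberMap f i ≫ Pi.π _ j = eqToHom (congrArg A.obj j.2.symm) ≫ f.2 j.1 := by
  simp [fiberMap]

theorem commSq_fiberMap {A B X Y : FormalProd C} {f : A ⟶ B} {g : X ⟶ Y} {u : A ⟶ X}
    {v : B ⟶ Y} (sq : CommSq u f g v) (r : X.ι → B.ι) (hr : ∀ x, f.1 (r x) = u.1 x)
    (hrg : ∀ j, r (g.1 j) = v.1 j) (x : X.ι) :
    CommSq (eqToHom (congrArg A.obj (hr x)) ≫ u.2 x) (f.2 (r x)) (fiberMap g x)
      (Pi.lift fun j : {j : Y.ι // g.1 j = x} =>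
        eqToHom (congrArg B.obj ((congrArg r j.2).symm.trans (hrg j.1))) ≫ v.2 j.1) := by
  constructor
  ext ⟨j, rfl⟩
  have hcomp := component_eq_of_eq sq.w j
  simp only [comp_snd_s9] at hcomp
  simp only [Category.assoc, fiberMap_π, limit.lift_π, Fan.mk_π_app, eqToHom_refl,
    Category.id_comp]
  rw [hcomp, ← Category.assoc (f.2 _), component_comp_eqToHom f (hrg j)]
  simp

theorem hasLiftingProperty_of_bijective {A B X Y : FormalProd C} (f : A ⟶ B) (g : X ⟶ Y)
    (hf : Function.Bijective f.1)
    (hfg : ∀ b x, HasLiftingProperty (f.2 b) (fiberMap g x)) : HasLiftingProperty f g := by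
  refine ⟨fun {u v} sq => ?_⟩
  choose r hr using fun x : X.ι => hf.2 (u.1 x)
  have hrg : ∀ j, r (g.1 j) = v.1 j := fun j =>
    hf.1 (by simpa [hr] using index_eq_of_eq sq.w j)
  let ℓ x := ((hfg (r x) x).sq_hasLift (commSq_fiberMap sq r hr hrg x)).exists_lift.some
  refine ⟨⟨{ l := ⟨r, fun x => (ℓ x).l⟩, fac_left := ?_, fac_right := ?_ }⟩⟩
  · exact hom_ext_s9 hr fun x => (ℓ x).fac_left
  · refine hom_ext_s9 hrg fun j => ?_
    simpa using (ℓ (g.1 j)).fac_right =≫ Pi.π _ ⟨j, rfl⟩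

end FiberMap

end FormalProd

theorem ClosedModelStructure.hasLiftingProperty_of_acyclicCof_fib {C : Type u}
    [Category.{v} C] (M : ClosedModelStructure C) {A B X Y : C} {i : A ⟶ B} {p : X ⟶ Y}
    (hi : M.cof i) (hi' : M.weq i) (hp : M.fib p) : HasLiftingProperty i p :=
  ⟨fun sq =>
    let ⟨l, hl₁, hl₂⟩ := M.lift_acyclicCof_fib _ _ _ _ hi hi' hp sq.w
    ⟨⟨⟨l, hl₁, hl₂⟩⟩⟩⟩

open FormalProd in
theorem formalProd_llp_acyclicCof_fib_general (C : Type u) [Category.{v} C]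
    [HasLimits C] (M : ClosedModelStructure C)
    {A B X Y : FormalProd C} (f : A ⟶ B) (g : X ⟶ Y) (u : A ⟶ X) (v : B ⟶ Y)
    (hf : prodCof M f) (hf' : prodWeq M f) (hg : prodFib M g)
    (hsq : u ≫ g = f ≫ v) :
    ∃ h : B ⟶ X, f ≫ h = u ∧ h ≫ g = v := by
  have : HasLiftingProperty f g := hasLiftingProperty_of_bijective f g hf'.1 fun b x =>
    M.hasLiftingProperty_of_acyclicCof_fib (hf b) (hf'.2 b) (hg x)
  let sq : CommSq u f g v := ⟨hsq⟩
  exact ⟨sq.lift, sq.fac_left, sq.fac_right⟩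

open FormalProd in
/-- Acyclic cofibrations in `Prod(C)` have the left lifting property with respect to
fibrations: given a commutative square `u ≫ g = f ≫ v` with `f` a cofibration which
is also a weak equivalence and `g` a fibration, there is a diagonal `h` making both
triangles commute. -/
theorem formalProd_llp_acyclicCof_fib (C : Type u) [Category.{v} C]
    [HasLimits C] [HasColimits C] (M : ClosedModelStructure C)
    {A B X Y : FormalProd C} (f : A ⟶ B) (g : X ⟶ Y) (u : A ⟶ X) (v : B ⟶ Y)
    (hf : prodCof M f) (hf' : prodWeq M f) (hg : prodFib M g)
    (hsq : u ≫ g = f ≫ v) :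
    ∃ h : B ⟶ X, f ≫ h = u ∧ h ≫ g = v :=
  formalProd_llp_acyclicCof_fib_general C M f g u v hf hf' hg hsq
end

section
/- Let C be a closed model category. Every morphism f in Prod(C) may be factorized both as a cofibration followed by an acyclic fibration, and as an acyclic cofibration followed by a fibration. -/
open CategoryTheory Limits

universe v u

/-!
Cofibrations and weak equivalences of `Prod(C)` are tested on components, fibrations on the
fibre maps `f^i`. For the first factorization, factor every component `f_j = w_j ∘ c_j` in `C`;
the `c_j` keep the index map of `f`, the `w_j` form a morphism with identity index map, whose
fibre maps are its components up to isomorphism. For the second, factor every fibre map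
`f^i = s_i ∘ q_i` in `C`; the `q_i` form a morphism with identity index map, and since a morphism
of `Prod(C)` with index map `r` is the same as a family of maps `A_i ⟶ ∏_{r j = i} B_j`, the
`s_i` reassemble to a morphism whose fibre maps are exactly the `s_i`.
-/

theorem ClosedModelStructure.fib_of_isIso {C : Type u} [Category.{v} C]
    (M : ClosedModelStructure C) {X Y : C} (e : X ⟶ Y) [IsIso e] : M.fib e :=
  M.fib_retract e (𝟙 X) (𝟙 X) (𝟙 X) (inv e) e (by simp) (by simp) (by simp) (by simp)
    (M.fib_id X)

namespace FormalProd

variable {C : Type u} [Category.{v} C]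

abbrev homMk {A B : FormalProd C} (r : B.ι → A.ι) (φ : ∀ j, A.obj (r j) ⟶ B.obj j) : A ⟶ B :=
  ⟨r, φ⟩

abbrev ofComponents {I : Type v} {X Y : I → C} (q : ∀ i, X i ⟶ Y i) :
    (⟨I, X⟩ : FormalProd C) ⟶ ⟨I, Y⟩ :=
  ⟨id, q⟩

theorem homMk_index_component {A B : FormalProd C} (f : A ⟶ B) :
    homMk (Hom.index f) (Hom.component f) = f :=
  rfl

theorem homMk_comp_ofComponents {A : FormalProd C} {I : Type v} {X Y : I → C}
    (r : I → A.ι) (φ : ∀ j, A.obj (r j) ⟶ X j) (ψ : ∀ j, X j ⟶ Y j) :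
    homMk (B := ⟨I, X⟩) r φ ≫ ofComponents ψ = homMk (B := ⟨I, Y⟩) r (fun j => φ j ≫ ψ j) :=
  rfl

theorem prodWeq_ofComponents (M : ClosedModelStructure C) {I : Type v} {X Y : I → C}
    {q : ∀ i, X i ⟶ Y i} (hq : ∀ i, M.weq (q i)) : prodWeq M (ofComponents q) :=
  ⟨Function.bijective_id, hq⟩

section Fibrations

variable [HasLimits C]

instance isIso_π_of_subsingleton {β : Type v} [Subsingleton β] (F : β → C) (b : β) :
    IsIso (Pi.π F b) := by
  have : Unique β := uniqueOfSubsingleton b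
  obtain rfl : b = default := Subsingleton.elim _ _
  rw [← productUniqueIso_hom]
  infer_instance

theorem fiberMap_eq_comp_inv_π {A B : FormalProd C} (f : A ⟶ B) (j : B.ι)
    [IsIso (Pi.π (fun j' : {j' : B.ι // f.1 j' = f.1 j} => B.obj j'.1) ⟨j, rfl⟩)] :
    fiberMap f (f.1 j) =
      f.2 j ≫ inv (Pi.π (fun j' : {j' : B.ι // f.1 j' = f.1 j} => B.obj j'.1) ⟨j, rfl⟩) := by
  rw [IsIso.eq_comp_inv, fiberMap_π, eqToHom_refl, Category.id_comp]

theorem prodFib_of_prodWeq {M : ClosedModelStructure C} {A B : FormalProd C} {p : A ⟶ B}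
    (hp : prodWeq M p) (hfib : ∀ j, M.fib (p.2 j)) : prodFib M p := by
  intro i
  obtain ⟨j, rfl⟩ := hp.1.2 i
  have : Subsingleton {j' : B.ι // p.1 j' = p.1 j} :=
    ⟨fun j₁ j₂ => Subtype.ext (hp.1.1 (j₁.2.trans j₂.2.symm))⟩
  rw [fiberMap_eq_comp_inv_π]
  exact M.fib_comp _ _ (hfib j) (M.fib_of_isIso _)

noncomputable abbrev homOfFiberMaps {A B : FormalProd C} (r : B.ι → A.ι)
    (s : ∀ i, A.obj i ⟶ ∏ᶜ (fun j : {j : B.ι // r j = i} => B.obj j.1)) : A ⟶ B :=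
  ⟨r, fun j => s (r j) ≫ Pi.π (fun j' : {j' : B.ι // r j' = r j} => B.obj j'.1) ⟨j, rfl⟩⟩

theorem fiberMap_homOfFiberMaps {A B : FormalProd C} (r : B.ι → A.ι)
    (s : ∀ i, A.obj i ⟶ ∏ᶜ (fun j : {j : B.ι // r j = i} => B.obj j.1)) (i : A.ι) :
    fiberMap (homOfFiberMaps r s) i = s i := by
  refine Pi.hom_ext _ _ fun ⟨j, hj⟩ => ?_
  subst hj
  simp only [homOfFiberMaps, fiberMap_π, eqToHom_refl, Category.id_comp]

theorem homOfFiberMaps_fiberMap {A B : FormalProd C} (f : A ⟶ B) :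
    homOfFiberMaps f.1 (fiberMap f) = f := by
  obtain ⟨r, φ⟩ := f
  simp [homOfFiberMaps]

theorem ofComponents_comp_homOfFiberMaps {I : Type v} {X Y : I → C} {B : FormalProd C}
    (q : ∀ i, X i ⟶ Y i) (r : B.ι → I)
    (s : ∀ i, Y i ⟶ ∏ᶜ (fun j : {j : B.ι // r j = i} => B.obj j.1)) :
    ofComponents q ≫ homOfFiberMaps (A := ⟨I, Y⟩) r s =
      homOfFiberMaps (A := ⟨I, X⟩) r (fun i => q i ≫ s i) := by
  simp only [ofComponents, homOfFiberMaps, Category.assoc]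
  rfl

end Fibrations

end FormalProd

open FormalProd in
theorem formalProd_factorizations_general (C : Type u) [Category.{v} C]
    [HasLimits C] (M : ClosedModelStructure C)
    {A B : FormalProd C} (f : A ⟶ B) :
    (∃ (Z : FormalProd C) (i : A ⟶ Z) (p : Z ⟶ B),
      prodCof M i ∧ prodFib M p ∧ prodWeq M p ∧ i ≫ p = f) ∧
    (∃ (Z : FormalProd C) (i : A ⟶ Z) (p : Z ⟶ B),
      prodCof M i ∧ prodWeq M i ∧ prodFib M p ∧ i ≫ p = f) := by
  constructor
  · choose Z c w hc hw_fib hw_weq hcw using fun j => M.fact_cof_acyclicFib (f.2 j)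
    have hw : prodWeq M (ofComponents w : (⟨B.ι, Z⟩ : FormalProd C) ⟶ B) :=
      prodWeq_ofComponents M hw_weq
    refine ⟨⟨B.ι, Z⟩, homMk f.1 c, ofComponents w, hc, prodFib_of_prodWeq hw hw_fib, hw, ?_⟩
    rw [homMk_comp_ofComponents]
    simp_rw [hcw]
    exact homMk_index_component f
  · choose Z q s hq hq_weq hs hqs using fun i => M.fact_acyclicCof_fib (fiberMap f i)
    refine ⟨⟨A.ι, Z⟩, ofComponents q, homOfFiberMaps (A := ⟨A.ι, Z⟩) f.1 s, hq,
      prodWeq_ofComponents M hq_weq,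
      fun i => (fiberMap_homOfFiberMaps (A := ⟨A.ι, Z⟩) f.1 s i).symm ▸ hs i, ?_⟩
    rw [ofComponents_comp_homOfFiberMaps]
    simp_rw [hqs]
    exact homOfFiberMaps_fiberMap f

open FormalProd in
/-- Every morphism of `Prod(C)` factors both as a cofibration followed by an acyclic
fibration and as an acyclic cofibration followed by a fibration. -/
theorem formalProd_factorizations (C : Type u) [Category.{v} C]
    [HasLimits C] [HasColimits C] (M : ClosedModelStructure C)
    {A B : FormalProd C} (f : A ⟶ B) :
    (∃ (Z : FormalProd C) (i : A ⟶ Z) (p : Z ⟶ B),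
      prodCof M i ∧ prodFib M p ∧ prodWeq M p ∧ i ≫ p = f) ∧
    (∃ (Z : FormalProd C) (i : A ⟶ Z) (p : Z ⟶ B),
      prodCof M i ∧ prodWeq M i ∧ prodFib M p ∧ i ≫ p = f) :=
  formalProd_factorizations_general C M f
end

section
/- Let C be a closed model category. Let F : C → Prod(C) be the functor sending an object of C to the formal product indexed by a one-element set on that object (and a morphism to itself), and let G : Prod(C) → C be the functor sending ∏_{i∈I} A_i to the product in C of the A_i over i ∈ I, and sending a morphism f : ∏_{i∈I} A_i → ∏_{j∈J} B_j to the product over i ∈ I of the induced morphisms f^i. Then F is left adjoint to G, and F preserves cofibrations, weak equivalences and fibrations; in particular the pair (F, G) is a Quillen adjunction between C and Prod(C). -/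
open CategoryTheory Limits

universe v u

namespace FormalProd

variable (C : Type u) [Category.{v} C]

/-- The inclusion functor `F : C ⥤ Prod(C)`, sending an object of `C` to the formal
product indexed by a one-element set on that object, and a morphism to itself. -/
def inclusionFunctor : C ⥤ FormalProd C where
  obj X := ⟨PUnit, fun _ => X⟩
  map f := ⟨fun _ => PUnit.unit, fun _ => f⟩
  map_id := by intros; rfl
  map_comp := by intros; rfl

/-- The functor `G : Prod(C) ⥤ C` sending a formal product `∏_{i∈I} A_i` to the
actual product in `C` of the `A_i` over `i ∈ I`, and a morphism
`f : ∏_{i∈I} A_i ⟶ ∏_{j∈J} B_j` to the induced morphism of products (the product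
over `i ∈ I` of the morphisms `f^i`). -/
noncomputable def productFunctor [HasLimits C] : FormalProd C ⥤ C where
  obj A := ∏ᶜ A.obj
  map {A B} f := Pi.lift fun j => Pi.π A.obj (f.1 j) ≫ f.2 j
  map_id := by
    intro A
    ext j
    simp only [limit.lift_π, Fan.mk_pt, Fan.mk_π_app, Category.id_comp]
    show Pi.π A.obj j ≫ 𝟙 (A.obj j) = Pi.π A.obj j
    simp
  map_comp := by
    intro A B D f g
    ext j
    simp only [limit.lift_π, Fan.mk_pt, Fan.mk_π_app, Category.assoc]
    show Pi.π A.obj (f.1 (g.1 j)) ≫ f.2 (g.1 j) ≫ g.2 j = _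
    simp

end FormalProd

namespace ClosedModelStructure

variable {C : Type u} [Category.{v} C] (M : ClosedModelStructure C)

/-- An isomorphism is a retract of an identity. -/
lemma fib_iso_hom {X Y : C} (e : X ≅ Y) : M.fib e.hom :=
  M.fib_retract e.hom (𝟙 X) (𝟙 X) (𝟙 X) e.inv e.hom (by simp) (by simp) (by simp) (by simp)
    (M.fib_id X)

end ClosedModelStructure

namespace FormalProd

variable {C : Type u} [Category.{v} C]

noncomputable def inclusionHomEquiv [HasLimits C] (X : C) (A : FormalProd C) :
    ((inclusionFunctor C).obj X ⟶ A) ≃ (X ⟶ (productFunctor C).obj A) where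
  toFun f := Pi.lift f.2
  invFun g := ⟨fun _ => PUnit.unit, fun j => g ≫ Pi.π A.obj j⟩
  left_inv _ := Sigma.ext rfl (heq_of_eq (funext fun _ => Pi.lift_π _ _))
  right_inv _ := Pi.hom_ext _ _ fun _ => Pi.lift_π _ _

variable (C) in
noncomputable def inclusionAdjunction [HasLimits C] :
    inclusionFunctor C ⊣ productFunctor C :=
  Adjunction.mkOfHomEquiv
    { homEquiv := inclusionHomEquiv
      homEquiv_naturality_left_symm := fun f g =>
        Sigma.ext rfl (heq_of_eq (funext fun _ => Category.assoc f g _))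
      homEquiv_naturality_right := fun {X A B} f g => Pi.hom_ext _ _ fun j => by
        change Pi.lift (fun j => f.2 (g.1 j) ≫ g.2 j) ≫ Pi.π B.obj j =
          (Pi.lift f.2 ≫ Pi.lift (fun j => Pi.π A.obj (g.1 j) ≫ g.2 j)) ≫ Pi.π B.obj j
        erw [Category.assoc, Pi.lift_π, Pi.lift_π, Pi.lift_π_assoc] }

lemma prodCof_inclusionFunctor_map (M : ClosedModelStructure C) {X Y : C} {f : X ⟶ Y}
    (hf : M.cof f) : prodCof M ((inclusionFunctor C).map f) :=
  fun _ => hf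

lemma prodWeq_inclusionFunctor_map (M : ClosedModelStructure C) {X Y : C} {f : X ⟶ Y}
    (hf : M.weq f) : prodWeq M ((inclusionFunctor C).map f) :=
  ⟨Function.bijective_id, fun _ => hf⟩

instance {X Y : C} (f : X ⟶ Y) (i : ((inclusionFunctor C).obj X).ι) :
    Unique {j : ((inclusionFunctor C).obj Y).ι // ((inclusionFunctor C).map f).1 j = i} where
  default := ⟨PUnit.unit, rfl⟩
  uniq _ := rfl

lemma fiberMap_inclusionFunctor_map [HasLimits C] {X Y : C} (f : X ⟶ Y)
    (i : ((inclusionFunctor C).obj X).ι) :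
    fiberMap ((inclusionFunctor C).map f) i = f ≫ (productUniqueIso fun _ => Y).inv := by
  ext j
  erw [Category.assoc, productUniqueIso_inv_π]
  simp only [fiberMap, limit.lift_π, Fan.mk_pt, Fan.mk_π_app, eqToHom_refl]
  exact (Category.id_comp f).trans (Category.comp_id f).symm

lemma prodFib_inclusionFunctor_map [HasLimits C] (M : ClosedModelStructure C) {X Y : C}
    {f : X ⟶ Y} (hf : M.fib f) : prodFib M ((inclusionFunctor C).map f) := fun i => by
  rw [fiberMap_inclusionFunctor_map]
  exact M.fib_comp _ _ hf (M.fib_iso_hom (productUniqueIso _).symm)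

end FormalProd

open FormalProd in
theorem formalProd_quillenAdjunction_general (C : Type u) [Category.{v} C]
    [HasLimits C] (M : ClosedModelStructure C) :
    Nonempty (inclusionFunctor C ⊣ productFunctor C) ∧
    (∀ {X Y : C} (f : X ⟶ Y), M.cof f → prodCof M ((inclusionFunctor C).map f)) ∧
    (∀ {X Y : C} (f : X ⟶ Y), M.weq f → prodWeq M ((inclusionFunctor C).map f)) ∧
    (∀ {X Y : C} (f : X ⟶ Y), M.fib f → prodFib M ((inclusionFunctor C).map f)) :=
  ⟨⟨inclusionAdjunction C⟩, fun _ => prodCof_inclusionFunctor_map M,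
    fun _ => prodWeq_inclusionFunctor_map M, fun _ => prodFib_inclusionFunctor_map M⟩

open FormalProd in
/-- `F` is left adjoint to `G`, and `F` preserves cofibrations, weak equivalences
and fibrations; in particular `(F, G)` is a Quillen adjunction between `C` and
`Prod(C)`. -/
theorem formalProd_quillenAdjunction (C : Type u) [Category.{v} C]
    [HasLimits C] [HasColimits C] (M : ClosedModelStructure C) :
    Nonempty (inclusionFunctor C ⊣ productFunctor C) ∧
    (∀ {X Y : C} (f : X ⟶ Y), M.cof f → prodCof M ((inclusionFunctor C).map f)) ∧
    (∀ {X Y : C} (f : X ⟶ Y), M.weq f → prodWeq M ((inclusionFunctor C).map f)) ∧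
    (∀ {X Y : C} (f : X ⟶ Y), M.fib f → prodFib M ((inclusionFunctor C).map f)) :=
  formalProd_quillenAdjunction_general C M
end

section
/- Let A be a commutative ring and let d : A → A be a derivation (an additive map satisfying the Leibniz rule d(ab) = a(db) + (da)b) such that d ∘ d = 0. Suppose there exists m ∈ A such that d m is a unit. Then: (1) any w ∈ A with w · (d m) = 1 satisfies d w = 0; and (2) every a ∈ A with d a = 0 lies in the image of d, i.e., there exists b ∈ A with d b = a. In other words, the complex (A, d) is acyclic. -/
/-! Inverting `d m` makes `w * m` a contracting homotopy: from `w * d m = 1` and `d (d m) = 0`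
the Leibniz rule gives `d w * d m = 0`, hence `d w = 0`, and then `d (a * (w * m)) = a` for
every cycle `a`. -/

section Leibniz

variable {A : Type*} [CommRing A] {d : A → A}

theorem map_one_eq_zero_of_leibniz (hleibniz : ∀ a b : A, d (a * b) = a * d b + d a * b) :
    d 1 = 0 := by
  have h := hleibniz 1 1
  simp only [mul_one, one_mul] at h
  linear_combination -h

theorem map_eq_zero_of_mul_map_eq_one (hleibniz : ∀ a b : A, d (a * b) = a * d b + d a * b)
    {m w : A} (hdm : d (d m) = 0) (hw : w * d m = 1) : d w = 0 := by
  have hdw : d w * d m = 0 := by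
    simpa [hw, hdm, map_one_eq_zero_of_leibniz hleibniz] using (hleibniz w (d m)).symm
  calc d w = d w * d m * w := by rw [mul_assoc, mul_comm (d m), hw, mul_one]
    _ = 0 := by rw [hdw, zero_mul]

theorem map_mul_mul_eq_self (hleibniz : ∀ a b : A, d (a * b) = a * d b + d a * b)
    {m w a : A} (hw : w * d m = 1) (hdw : d w = 0) (ha : d a = 0) :
    d (a * (w * m)) = a := by
  rw [hleibniz, hleibniz, hw, hdw, ha]
  ring

end Leibniz

theorem acyclic_of_unit_differential_general (A : Type*) [CommRing A] (d : A → A)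
    (hleibniz : ∀ a b : A, d (a * b) = a * d b + d a * b)
    (hd2 : ∀ a : A, d (d a) = 0)
    (m : A) (hm : IsUnit (d m)) :
    (∀ w : A, w * d m = 1 → d w = 0) ∧
    (∀ a : A, d a = 0 → ∃ b : A, d b = a) := by
  have hclosed : ∀ w : A, w * d m = 1 → d w = 0 :=
    fun w hw ↦ map_eq_zero_of_mul_map_eq_one hleibniz (hd2 m) hw
  obtain ⟨w, hw⟩ := hm.exists_left_inv
  exact ⟨hclosed, fun a ha ↦
    ⟨a * (w * m), map_mul_mul_eq_self hleibniz hw (hclosed w hw) ha⟩⟩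

/-- Let `A` be a commutative ring and `d : A → A` a derivation (additive and
satisfying the Leibniz rule) with `d ∘ d = 0`.  If `d m` is a unit for some
`m ∈ A`, then (1) any `w` with `w * d m = 1` satisfies `d w = 0`, and (2) every
`a` with `d a = 0` is of the form `a = d b`; i.e. the complex `(A, d)` is acyclic. -/
theorem acyclic_of_unit_differential (A : Type*) [CommRing A] (d : A → A)
    (hadd : ∀ a b : A, d (a + b) = d a + d b)
    (hleibniz : ∀ a b : A, d (a * b) = a * d b + d a * b)
    (hd2 : ∀ a : A, d (d a) = 0)
    (m : A) (hm : IsUnit (d m)) :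
    (∀ w : A, w * d m = 1 → d w = 0) ∧
    (∀ a : A, d a = 0 → ∃ b : A, d b = a) :=
  acyclic_of_unit_differential_general A d hleibniz hd2 m hm
end
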